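/- For real s, t with |s| + |t| < 2, the second partial derivative of ent with respect to t is ent_tt(s,t) = -π/(32·sin(π(p_a+p_b))·sin(πp_a)·sin(πp_b)) · ( sin^2(πs/2) + (cos(πs/2)+cos(πt/2))^2/2 ), which is strictly negative except at the four points (s,t) = (±2,0), (0,±2). -/

import Mathlib

open Real

/-- The asymptotic probability `p_a` of an `a`-edge, for tilt `(s, t)`. -/
noncomputable def pA (s t : ℝ) : ℝ :=
  t / 4 + (1 / (2 * π)) * arccos ((cos (π * t / 2) - cos (π * s / 2)) / 2)

/-- The asymptotic probability `p_b` of a `b`-edge, for tilt `(s, t)`. -/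
noncomputable def pB (s t : ℝ) : ℝ :=
  -t / 4 + (1 / (2 * π)) * arccos ((cos (π * t / 2) - cos (π * s / 2)) / 2)

/-- The asymptotic probability `p_c` of a `c`-edge, for tilt `(s, t)`. -/
noncomputable def pC (s t : ℝ) : ℝ :=
  -s / 4 + (1 / (2 * π)) * arccos ((cos (π * s / 2) - cos (π * t / 2)) / 2)

/-- The asymptotic probability `p_d` of a `d`-edge, for tilt `(s, t)`. -/
noncomputable def pD (s t : ℝ) : ℝ :=
  s / 4 + (1 / (2 * π)) * arccos ((cos (π * s / 2) - cos (π * t / 2)) / 2)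

/-- The Lobachevsky function `L(z) = -∫₀^z log|2 sin u| du`. -/
noncomputable def Lob (z : ℝ) : ℝ := -∫ u in (0 : ℝ)..z, Real.log |2 * Real.sin u|

/-- The local entropy as a function of the tilt `(s, t)`:
`ent(s,t) = (1/π)(L(πp_a) + L(πp_b) + L(πp_c) + L(πp_d))`. -/
noncomputable def ent (s t : ℝ) : ℝ :=
  (1 / π) * (Lob (π * pA s t) + Lob (π * pB s t) +
    Lob (π * pC s t) + Lob (π * pD s t))

/-!
With `θ = arccos ((cos (π t / 2) - cos (π s / 2)) / 2)` the four angles are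
`π p_a, π p_b = θ / 2 ± π t / 4` and `π p_c, π p_d = (π - θ) / 2 ∓ π s / 4`, so the
product-to-sum formula gives `sin π p_a · sin π p_b = sin π p_c · sin π p_d =
(cos (π s / 2) + cos (π t / 2)) / 4`. As `L' = -log (2 sin)`, in `∂ₜ ent` the `log 2` terms
cancel (the `t`-derivatives of the four angles sum to zero) and so do the `∂ₜ θ` terms (by the
product identity), leaving `ent_t = -¼ log (sin π p_a / sin π p_b)`. Differentiating once more,
with `∂ₜ θ = (π / 4) sin (π t / 2) / sin θ`, gives the formula. For `|s| + |t| < 2` one has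
`|π t / 2| < θ < π`, so all sines involved are positive, whence the sign.
-/

open MeasureTheory

theorem hasDerivAt_lob {z : ℝ} (hz : sin z ≠ 0) : HasDerivAt Lob (-log (2 * sin z)) z := by
  have hcont : Continuous fun u => 2 * sin u := continuous_const.mul continuous_sin
  have hint : IntervalIntegrable (fun u => log |2 * sin u|) volume 0 z :=
    (analyticOnNhd_const.mul analyticOnNhd_sin).meromorphicOn.intervalIntegrable_log_norm
  have hmeas : StronglyMeasurableAtFilter (fun u => log |2 * sin u|) (nhds z) :=
    (measurable_log.comp hcont.abs.measurable).stronglyMeasurable.stronglyMeasurableAtFilter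
  have hcz : ContinuousAt (fun u => log |2 * sin u|) z :=
    hcont.abs.continuousAt.log (by simpa using hz)
  rw [← log_abs]
  exact (intervalIntegral.integral_hasDerivAt_right hint hmeas hcz).neg

theorem HasDerivAt.lob {f : ℝ → ℝ} {f' x : ℝ} (hf : HasDerivAt f f' x)
    (hx : Real.sin (f x) ≠ 0) :
    HasDerivAt (fun y => Lob (f y)) (-Real.log (2 * Real.sin (f x)) * f') x :=
  (hasDerivAt_lob hx).comp x hf

theorem cos_add_cos_pos {a b : ℝ} (h : |a| + |b| < π) : 0 < cos a + cos b := by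
  have hsum : |a + b| < π := (abs_add_le a b).trans_lt h
  have hdiff : |a - b| < π := (abs_sub a b).trans_lt h
  rw [cos_add_cos]
  obtain ⟨hsum₁, hsum₂⟩ := abs_lt.1 hsum
  obtain ⟨hdiff₁, hdiff₂⟩ := abs_lt.1 hdiff
  have h1 := cos_pos_of_mem_Ioo (x := (a + b) / 2) ⟨by linarith, by linarith⟩
  have h2 := cos_pos_of_mem_Ioo (x := (a - b) / 2) ⟨by linarith, by linarith⟩
  positivity

noncomputable def tiltAngle (s t : ℝ) : ℝ := arccos ((cos (π * t / 2) - cos (π * s / 2)) / 2)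

theorem cos_tiltAngle (s t : ℝ) :
    cos (tiltAngle s t) = (cos (π * t / 2) - cos (π * s / 2)) / 2 :=
  cos_arccos (by linarith [cos_le_one (π * s / 2), neg_one_le_cos (π * t / 2)])
    (by linarith [cos_le_one (π * t / 2), neg_one_le_cos (π * s / 2)])

theorem tiltAngle_swap (s t : ℝ) : tiltAngle t s = π - tiltAngle s t := by
  rw [tiltAngle, tiltAngle, ← arccos_neg]; congr 1; ring

theorem pi_mul_pA (s t : ℝ) : π * pA s t = π * t / 4 + tiltAngle s t / 2 := by
  rw [pA, tiltAngle]; field_simp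

theorem pi_mul_pB (s t : ℝ) : π * pB s t = -(π * t / 4) + tiltAngle s t / 2 := by
  rw [pB, tiltAngle]; field_simp

theorem pi_mul_pC (s t : ℝ) : π * pC s t = π / 2 - π * s / 4 - tiltAngle s t / 2 := by
  rw [show pC s t = pB t s from rfl, pi_mul_pB, tiltAngle_swap]; ring

theorem pi_mul_pD (s t : ℝ) : π * pD s t = π / 2 + π * s / 4 - tiltAngle s t / 2 := by
  rw [show pD s t = pA t s from rfl, pi_mul_pA, tiltAngle_swap]; ring

theorem pi_mul_pA_add_pB (s t : ℝ) : π * (pA s t + pB s t) = tiltAngle s t := by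
  rw [mul_add, pi_mul_pA, pi_mul_pB]; ring

theorem sin_pi_mul_pA_mul_sin_pi_mul_pB (s t : ℝ) :
    sin (π * pA s t) * sin (π * pB s t) = (cos (π * s / 2) + cos (π * t / 2)) / 4 := by
  have h := cos_sub_cos (π * t / 2) (tiltAngle s t)
  rw [cos_tiltAngle, show (π * t / 2 - tiltAngle s t) / 2 = -(π * pB s t) by rw [pi_mul_pB]; ring,
    show (π * t / 2 + tiltAngle s t) / 2 = π * pA s t by rw [pi_mul_pA]; ring, sin_neg] at h
  linarith

theorem sin_pi_mul_pC_mul_sin_pi_mul_pD (s t : ℝ) :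
    sin (π * pC s t) * sin (π * pD s t) = (cos (π * s / 2) + cos (π * t / 2)) / 4 := by
  rw [show pC s t = pB t s from rfl, show pD s t = pA t s from rfl, mul_comm,
    sin_pi_mul_pA_mul_sin_pi_mul_pB, add_comm]

section Derivatives

variable {s t θ' : ℝ} (hθ : HasDerivAt (tiltAngle s) θ' t)
include hθ

theorem hasDerivAt_pi_mul_pA : HasDerivAt (fun t => π * pA s t) (π / 4 + θ' / 2) t := by
  simp only [pi_mul_pA]
  exact (((hasDerivAt_id t).const_mul π).div_const 4).add (hθ.div_const 2)
    |>.congr_deriv (by simp)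

theorem hasDerivAt_pi_mul_pB : HasDerivAt (fun t => π * pB s t) (-(π / 4) + θ' / 2) t := by
  simp only [pi_mul_pB]
  exact (((hasDerivAt_id t).const_mul π).div_const 4).neg.add (hθ.div_const 2)
    |>.congr_deriv (by simp)

theorem hasDerivAt_pi_mul_pC : HasDerivAt (fun t => π * pC s t) (-(θ' / 2)) t := by
  simp only [pi_mul_pC]
  exact (hθ.div_const 2).const_sub _ |>.congr_deriv (by simp)

theorem hasDerivAt_pi_mul_pD : HasDerivAt (fun t => π * pD s t) (-(θ' / 2)) t := by
  simp only [pi_mul_pD]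
  exact (hθ.div_const 2).const_sub _

end Derivatives

section

variable {s t : ℝ} (h : |s| + |t| < 2)
include h

theorem cos_pi_mul_half_add_cos_pi_mul_half_pos : 0 < cos (π * s / 2) + cos (π * t / 2) := by
  apply cos_add_cos_pos
  simp only [abs_div, abs_mul, abs_of_pos pi_pos, abs_two]
  nlinarith [pi_pos]

theorem abs_lt_tiltAngle : |π * t / 2| < tiltAngle s t := by
  have hpos := cos_pi_mul_half_add_cos_pi_mul_half_pos h
  have ht : |π * t / 2| ≤ π := by
    rw [abs_div, abs_mul, abs_of_pos pi_pos, abs_two]; nlinarith [pi_pos, abs_nonneg s]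
  rw [← arccos_cos (abs_nonneg _) ht, cos_abs, tiltAngle]
  exact strictAntiOn_arccos
    ⟨by linarith [cos_le_one (π * s / 2), neg_one_le_cos (π * t / 2)],
      by linarith [cos_le_one (π * t / 2), neg_one_le_cos (π * s / 2)]⟩
    ⟨neg_one_le_cos _, cos_le_one _⟩ (by linarith)

theorem tiltAngle_mem_Ioo : tiltAngle s t ∈ Set.Ioo 0 π := by
  have hts := abs_lt_tiltAngle (s := t) (t := s) (by rwa [add_comm])
  rw [tiltAngle_swap] at hts
  exact ⟨(abs_nonneg _).trans_lt (abs_lt_tiltAngle h), by linarith [abs_nonneg (π * s / 2)]⟩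

theorem sin_tiltAngle_pos : 0 < sin (tiltAngle s t) :=
  sin_pos_of_pos_of_lt_pi (tiltAngle_mem_Ioo h).1 (tiltAngle_mem_Ioo h).2

theorem sin_pi_mul_pA_pos : 0 < sin (π * pA s t) := by
  obtain ⟨hlo, hhi⟩ := abs_lt.1 (abs_lt_tiltAngle h)
  obtain ⟨hpos, hlt⟩ := tiltAngle_mem_Ioo h
  apply sin_pos_of_pos_of_lt_pi <;> rw [pi_mul_pA] <;> linarith

theorem sin_pi_mul_pB_pos : 0 < sin (π * pB s t) := by
  obtain ⟨hlo, hhi⟩ := abs_lt.1 (abs_lt_tiltAngle h)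
  obtain ⟨hpos, hlt⟩ := tiltAngle_mem_Ioo h
  apply sin_pos_of_pos_of_lt_pi <;> rw [pi_mul_pB] <;> linarith

theorem sin_pi_mul_pC_pos : 0 < sin (π * pC s t) :=
  sin_pi_mul_pB_pos (s := t) (t := s) (by rwa [add_comm])

theorem sin_pi_mul_pD_pos : 0 < sin (π * pD s t) :=
  sin_pi_mul_pA_pos (s := t) (t := s) (by rwa [add_comm])

theorem hasDerivAt_tiltAngle :
    HasDerivAt (tiltAngle s) (π / 4 * sin (π * t / 2) / sin (tiltAngle s t)) t := by
  obtain ⟨hpos, hlt⟩ := tiltAngle_mem_Ioo h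
  rw [tiltAngle, arccos_pos] at hpos
  rw [tiltAngle, arccos_lt_pi] at hlt
  have hX : HasDerivAt (fun t => (cos (π * t / 2) - cos (π * s / 2)) / 2)
      (-(sin (π * t / 2) * (π / 2)) / 2) t :=
    ((((hasDerivAt_id t).const_mul π).div_const 2).cos.sub_const _).div_const 2 |>.congr_deriv
      (by simp)
  refine ((hasDerivAt_arccos hlt.ne' hpos.ne).comp t hX).congr_deriv ?_
  rw [tiltAngle, sin_arccos]
  ring

theorem hasDerivAt_ent :
    HasDerivAt (ent s) (-(1 / 4) * log (sin (π * pA s t) / sin (π * pB s t))) t := by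
  obtain ⟨θ', hθ⟩ : ∃ θ', HasDerivAt (tiltAngle s) θ' t := ⟨_, hasDerivAt_tiltAngle h⟩
  have hA := sin_pi_mul_pA_pos h
  have hB := sin_pi_mul_pB_pos h
  have hC := sin_pi_mul_pC_pos h
  have hD := sin_pi_mul_pD_pos h
  have hlog : log (sin (π * pA s t)) + log (sin (π * pB s t)) =
      log (sin (π * pC s t)) + log (sin (π * pD s t)) := by
    rw [← log_mul hA.ne' hB.ne', ← log_mul hC.ne' hD.ne', sin_pi_mul_pA_mul_sin_pi_mul_pB,
      sin_pi_mul_pC_mul_sin_pi_mul_pD]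
  have hLA := (hasDerivAt_pi_mul_pA hθ).lob hA.ne'
  have hLB := (hasDerivAt_pi_mul_pB hθ).lob hB.ne'
  have hLC := (hasDerivAt_pi_mul_pC hθ).lob hC.ne'
  have hLD := (hasDerivAt_pi_mul_pD hθ).lob hD.ne'
  refine (((hLA.add hLB).add hLC).add hLD).const_mul (1 / π) |>.congr_deriv ?_
  rw [log_div hA.ne' hB.ne', log_mul two_ne_zero hA.ne', log_mul two_ne_zero hB.ne',
    log_mul two_ne_zero hC.ne', log_mul two_ne_zero hD.ne']
  field_simp
  linear_combination (-4 * θ') * hlog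

theorem hasDerivAt_deriv_ent :
    HasDerivAt (deriv (ent s))
      (-π / (32 * sin (π * (pA s t + pB s t)) * sin (π * pA s t) * sin (π * pB s t)) *
        (sin (π * s / 2) ^ 2 + (cos (π * s / 2) + cos (π * t / 2)) ^ 2 / 2)) t := by
  have hev : deriv (ent s) =ᶠ[nhds t]
      fun t => -(1 / 4) * (log (sin (π * pA s t)) - log (sin (π * pB s t))) := by
    have hopen : IsOpen {t' : ℝ | |s| + |t'| < 2} :=
      isOpen_lt (continuous_const.add continuous_abs) continuous_const
    filter_upwards [hopen.mem_nhds h] with t' ht'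
    rw [(hasDerivAt_ent ht').deriv,
      log_div (sin_pi_mul_pA_pos ht').ne' (sin_pi_mul_pB_pos ht').ne']
  have hθ := hasDerivAt_tiltAngle h
  have hA := sin_pi_mul_pA_pos h
  have hB := sin_pi_mul_pB_pos h
  have hθpos := sin_tiltAngle_pos h
  have hLA := (hasDerivAt_pi_mul_pA hθ).sin.log hA.ne'
  have hLB := (hasDerivAt_pi_mul_pB hθ).sin.log hB.ne'
  refine ((hLA.sub hLB).const_mul (-(1 / 4))).congr_of_eventuallyEq hev |>.congr_deriv ?_
  have hsum : sin (π * pA s t) * cos (π * pB s t) + cos (π * pA s t) * sin (π * pB s t) =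
      sin (tiltAngle s t) := by
    rw [← sin_add, pi_mul_pA, pi_mul_pB]; ring_nf
  have hdiff : sin (π * pA s t) * cos (π * pB s t) - cos (π * pA s t) * sin (π * pB s t) =
      sin (π * t / 2) := by
    rw [← sin_sub, pi_mul_pA, pi_mul_pB]; ring_nf
  have hθsq : sin (tiltAngle s t) ^ 2 = 1 - ((cos (π * t / 2) - cos (π * s / 2)) / 2) ^ 2 := by
    rw [sin_sq, cos_tiltAngle]
  have hs := sin_sq_add_cos_sq (π * s / 2)
  have ht := sin_sq_add_cos_sq (π * t / 2)
  rw [pi_mul_pA_add_pB]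
  field_simp
  -- `cot A ± cot B = sin (B ± A) / (sin A sin B)`, and
  -- `2 sin² θ - sin² (π t / 2) = sin² (π s / 2) + (cos (π s / 2) + cos (π t / 2))² / 2`.
  linear_combination (32 * sin (π * t / 2)) * hdiff - (64 * sin (tiltAngle s t)) * hsum -
    64 * hθsq + 32 * hs + 32 * ht

end

/-- The second partial derivative of `ent` with respect to `t`:  for
`|s| + |t| < 2`,
`ent_tt(s,t) = -π/(32 sin(π(p_a+p_b)) sin(πp_a) sin(πp_b)) ·
  (sin²(πs/2) + (cos(πs/2)+cos(πt/2))²/2)`,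
and this quantity is strictly negative (the excluded points
`(±2,0), (0,±2)` do not satisfy `|s|+|t| < 2`). -/
theorem ent_tt_formula (s t : ℝ) (h : |s| + |t| < 2) :
    deriv (fun t' => deriv (fun t'' => ent s t'') t') t =
      -π / (32 * sin (π * (pA s t + pB s t)) * sin (π * pA s t) *
          sin (π * pB s t)) *
        (sin (π * s / 2) ^ 2 +
          (cos (π * s / 2) + cos (π * t / 2)) ^ 2 / 2) ∧
    deriv (fun t' => deriv (fun t'' => ent s t'') t') t < 0 := by
  have hformula := (hasDerivAt_deriv_ent h).deriv
  refine ⟨hformula, hformula ▸ mul_neg_of_neg_of_pos (div_neg_of_neg_of_pos ?_ ?_) ?_⟩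
  · linarith [pi_pos]
  · have hA := sin_pi_mul_pA_pos h
    have hB := sin_pi_mul_pB_pos h
    have hθ := sin_tiltAngle_pos h
    rw [pi_mul_pA_add_pB]
    positivity
  · have hcos := cos_pi_mul_half_add_cos_pi_mul_half_pos h
    positivity
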